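/- For every real A and every B ≥ 0, one has Φ(A + B) - exp(-2AB) · Φ(A - B) ≤ Φ(A + B) ≤ 1; combined with the lower bound Φ(A - B) ≤ exp(2AB) Φ(A + B), the quantity Φ(A + B) - exp(-2AB) Φ(A - B) lies in the interval [0, 1]. In particular, for μ ≥ c the survival probability F(t, τ, q; μ, σ, c) lies in [0, 1] for all t > 0, τ > 0, σ > 0 and q ∈ ℝ. -/
import Mathlib


open Real MeasureTheory Filter Topology

/-- Standard normal density φ(x) = exp(-x²/2)/√(2π). -/
noncomputable def stdPdf (x : ℝ) : ℝ := Real.exp (-(x ^ 2) / 2) / Real.sqrt (2 * Real.pi)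

/-- Standard normal CDF Φ(x) = ∫_{-∞}^x φ(u) du. -/
noncomputable def stdCdf (x : ℝ) : ℝ := ∫ u in Set.Iio x, stdPdf u

/-- Survival probability F(t, τ, q; μ, σ, c): the probability that the agent's
reputation does not hit the cost c before time t, given true quality q. -/
noncomputable def survF (t τ q μ σ c : ℝ) : ℝ :=
  stdCdf (Real.sqrt (t * τ) * (q - c) + (μ - c) / (σ ^ 2 * Real.sqrt (t * τ)))
    - Real.exp (-(2 / σ ^ 2) * (μ - c) * (q - c)) *
      stdCdf (Real.sqrt (t * τ) * (q - c) - (μ - c) / (σ ^ 2 * Real.sqrt (t * τ)))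

lemma stdPdf_nonneg (x : ℝ) : 0 ≤ stdPdf x := by
  unfold stdPdf
  positivity

lemma stdPdf_eq (x : ℝ) : stdPdf x = Real.exp (-(1/2 : ℝ) * x ^ 2) * (Real.sqrt (2 * Real.pi))⁻¹ := by
  unfold stdPdf
  rw [div_eq_mul_inv]
  ring_nf

lemma integrable_stdPdf : Integrable stdPdf := by
  have h : Integrable fun x : ℝ => Real.exp (-(1/2 : ℝ) * x ^ 2) :=
    integrable_exp_neg_mul_sq (by norm_num)
  exact (h.mul_const (Real.sqrt (2 * Real.pi))⁻¹).congr
    (Filter.Eventually.of_forall fun x => (stdPdf_eq x).symm)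

lemma integral_stdPdf : ∫ x, stdPdf x = 1 := by
  have h : (∫ x : ℝ, Real.exp (-(1/2 : ℝ) * x ^ 2)) = Real.sqrt (Real.pi / (1/2)) :=
    integral_gaussian (1/2)
  have : (∫ x, stdPdf x) = (∫ x : ℝ, Real.exp (-(1/2 : ℝ) * x ^ 2)) * (Real.sqrt (2 * Real.pi))⁻¹ := by
    rw [← integral_mul_const]
    exact integral_congr_ae (Filter.Eventually.of_forall fun x => stdPdf_eq x)
  rw [this, h]
  have h2 : Real.pi / (1/2 : ℝ) = 2 * Real.pi := by ring
  rw [h2, mul_inv_cancel₀]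
  positivity

lemma stdCdf_nonneg (x : ℝ) : 0 ≤ stdCdf x :=
  setIntegral_nonneg measurableSet_Iio fun y _ => stdPdf_nonneg y

lemma stdCdf_le_one (x : ℝ) : stdCdf x ≤ 1 := by
  have := setIntegral_le_integral (μ := volume) (s := Set.Iio x) integrable_stdPdf
    (Filter.Eventually.of_forall fun y => stdPdf_nonneg y)
  rw [integral_stdPdf] at this
  exact this

lemma key (A B : ℝ) (hB : 0 ≤ B) :
    Real.exp (-(2 * A * B)) * stdCdf (A - B) ≤ stdCdf (A + B) := by
  -- translate: stdCdf (A - B) = ∫ v in Iio (A + B), stdPdf (v - 2B)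
  have htrans : stdCdf (A - B) = ∫ v in Set.Iio (A + B), stdPdf (v - 2 * B) := by
    unfold stdCdf
    rw [← integral_indicator measurableSet_Iio, ← integral_indicator measurableSet_Iio]
    rw [← MeasureTheory.integral_add_right_eq_self
      (fun u => (Set.Iio (A + B)).indicator (fun v => stdPdf (v - 2 * B)) u) (2 * B)]
    refine integral_congr_ae (Filter.Eventually.of_forall fun u => ?_)
    simp only [Set.indicator_apply, Set.mem_Iio]
    by_cases h : u < A - B
    · rw [if_pos h, if_pos (by linarith : u + 2 * B < A + B)]
      congr 1
      ring
    · rw [if_neg h, if_neg (by intro hh; exact h (by linarith))]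
  have hint : IntegrableOn (fun v => Real.exp (-(2 * A * B)) * stdPdf (v - 2 * B))
      (Set.Iio (A + B)) := by
    have : Integrable (fun v : ℝ => stdPdf (v - 2 * B)) := by
      simpa [sub_eq_add_neg] using integrable_stdPdf.comp_add_right (-(2 * B))
    exact (this.const_mul _).integrableOn
  calc Real.exp (-(2 * A * B)) * stdCdf (A - B)
      = ∫ v in Set.Iio (A + B), Real.exp (-(2 * A * B)) * stdPdf (v - 2 * B) := by
        rw [htrans, integral_const_mul]
    _ ≤ ∫ v in Set.Iio (A + B), stdPdf v := by
        refine setIntegral_mono_on hint integrable_stdPdf.integrableOn measurableSet_Iio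
          fun v hv => ?_
        have hv' : v < A + B := hv
        rw [stdPdf_eq, stdPdf_eq, ← mul_assoc]
        apply mul_le_mul_of_nonneg_right _ (by positivity)
        rw [← Real.exp_add, Real.exp_le_exp]
        nlinarith [mul_nonneg hB (sub_nonneg.mpr hv'.le)]

/-- for B ≥ 0, Φ(A + B) - exp(-2AB)·Φ(A - B) ≤ Φ(A + B) ≤ 1; together with
the lower bound Φ(A - B) ≤ exp(2AB)·Φ(A + B), the quantity lies in [0, 1]. In particular,
for μ ≥ c the survival probability F(t, τ, q; μ, σ, c) lies in [0, 1]. -/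
theorem stmt_18 :
    (∀ A B : ℝ, 0 ≤ B →
      stdCdf (A + B) - Real.exp (-(2 * A * B)) * stdCdf (A - B) ≤ stdCdf (A + B) ∧
      stdCdf (A + B) ≤ 1 ∧
      stdCdf (A + B) - Real.exp (-(2 * A * B)) * stdCdf (A - B) ∈ Set.Icc (0 : ℝ) 1) ∧
    (∀ μ σ c τ q t : ℝ, c ≤ μ → 0 < σ → 0 < τ → 0 < t →
      survF t τ q μ σ c ∈ Set.Icc (0 : ℝ) 1) := by
  have main : ∀ A B : ℝ, 0 ≤ B →
      stdCdf (A + B) - Real.exp (-(2 * A * B)) * stdCdf (A - B) ≤ stdCdf (A + B) ∧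
      stdCdf (A + B) ≤ 1 ∧
      stdCdf (A + B) - Real.exp (-(2 * A * B)) * stdCdf (A - B) ∈ Set.Icc (0 : ℝ) 1 := by
    intro A B hB
    have h1 : 0 ≤ Real.exp (-(2 * A * B)) * stdCdf (A - B) :=
      mul_nonneg (Real.exp_pos _).le (stdCdf_nonneg _)
    refine ⟨by linarith, stdCdf_le_one _, ⟨by linarith [key A B hB], ?_⟩⟩
    linarith [stdCdf_le_one (A + B)]
  refine ⟨main, fun μ σ c τ q t hc hσ hτ ht => ?_⟩
  set A := Real.sqrt (t * τ) * (q - c) with hA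
  set B := (μ - c) / (σ ^ 2 * Real.sqrt (t * τ)) with hBdef
  have hs : 0 < Real.sqrt (t * τ) := Real.sqrt_pos.mpr (by positivity)
  have hB : 0 ≤ B := by
    apply div_nonneg (by linarith) (by positivity)
  have hexp : -(2 / σ ^ 2) * (μ - c) * (q - c) = -(2 * A * B) := by
    rw [hA, hBdef]
    field_simp
  have := (main A B hB).2.2
  unfold survF
  rw [hexp]
  exact this
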